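/- Let L act on trigonometric Fourier modes by the Taylor-Green linearization. With φ_{j1,j2}(x) = (1/(√2 π)) cos(j1 x1 + j2 x2), one has L φ_{j1,j2} = α(φ_{j1+1,j2+1} - φ_{j1-1,j2-1}) + β(-φ_{j1+1,j2-1} + φ_{j1-1,j2+1}) where α = (j1-j2)(j1²+j2²-2)/(4(j1²+j2²)) and β = (j1+j2)(j1²+j2²-2)/(4(j1²+j2²)), for (j1,j2) ≠ (0,0). -/

import Mathlib

open Real

/-- The linearized Euler operator about the Taylor-Green vortex, applied pointwise to a
scalar field `w` whose stream function (`Δ⁻¹ w`) is `ψw`: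
`L w = -(u_s·∇)w - (∇⊥ψw)·∇ω_s`, with `u_s = (-cos x₁ sin x₂, sin x₁ cos x₂)` and
`ω_s = 2 cos x₁ cos x₂`. -/
noncomputable def TGLin (w ψw : ℝ → ℝ → ℝ) (x1 x2 : ℝ) : ℝ :=
  -((-Real.cos x1 * Real.sin x2) * deriv (fun y : ℝ => w y x2) x1
      + (Real.sin x1 * Real.cos x2) * deriv (fun y : ℝ => w x1 y) x2)
    - ((-(deriv (fun y : ℝ => ψw x1 y) x2))
          * deriv (fun y : ℝ => 2 * Real.cos y * Real.cos x2) x1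
        + (deriv (fun y : ℝ => ψw y x2) x1)
          * deriv (fun y : ℝ => 2 * Real.cos x1 * Real.cos y) x2)

/-- The normalized Fourier cosine mode `φ_{j₁,j₂}(x) = (1/(√2 π)) cos(j₁x₁ + j₂x₂)`. -/
noncomputable def fourierMode (j1 j2 : ℤ) (x1 x2 : ℝ) : ℝ :=
  (1 / (Real.sqrt 2 * π)) * Real.cos ((j1 : ℝ) * x1 + (j2 : ℝ) * x2)

/-!
Since `∇ω_s = 2 (u_s)⊥`, the term `(∇⊥ψ)·∇ω_s` equals `2 (u_s·∇)ψ`, so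
`L w = -(u_s·∇)(w + 2Δ⁻¹w)`. On a mode `Δ⁻¹φ_j = -φ_j/|j|²`, hence
`L φ_j = (1 - 2/|j|²)·(-(u_s·∇)φ_j)`; the components of `u_s` are products of `cos`/`sin` of
`x₁` and `x₂`, so the product-to-sum formulas turn `-(u_s·∇)φ_j` into the four diagonally
shifted modes.
-/

/-- `-(u_s·∇)w` -/
noncomputable def negAdvectionTG (w : ℝ → ℝ → ℝ) (x1 x2 : ℝ) : ℝ :=
  cos x1 * sin x2 * deriv (fun y => w y x2) x1 - sin x1 * cos x2 * deriv (fun y => w x1 y) x2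

theorem TGLin_eq_negAdvectionTG (w ψw : ℝ → ℝ → ℝ) (x1 x2 : ℝ) :
    TGLin w ψw x1 x2 = negAdvectionTG w x1 x2 + 2 * negAdvectionTG ψw x1 x2 := by
  have hω₁ : deriv (fun y => 2 * cos y * cos x2) x1 = -(2 * sin x1 * cos x2) := by
    rw [(((hasDerivAt_cos x1).const_mul 2).mul_const (cos x2)).deriv]; ring
  have hω₂ : deriv (fun y => 2 * cos x1 * cos y) x2 = -(2 * cos x1 * sin x2) := by
    rw [((hasDerivAt_cos x2).const_mul (2 * cos x1)).deriv]; ring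
  rw [TGLin, negAdvectionTG, negAdvectionTG, hω₁, hω₂]
  ring

theorem TGLin_const_mul_self (w : ℝ → ℝ → ℝ) (c x1 x2 : ℝ) :
    TGLin w (fun a b => c * w a b) x1 x2 = (1 + 2 * c) * negAdvectionTG w x1 x2 := by
  rw [TGLin_eq_negAdvectionTG, negAdvectionTG, negAdvectionTG, deriv_const_mul_field,
    deriv_const_mul_field]
  ring

theorem hasDerivAt_fourierMode_fst (j1 j2 : ℤ) (x1 x2 : ℝ) :
    HasDerivAt (fun y => fourierMode j1 j2 y x2)
      (-(1 / (√2 * π)) * j1 * sin (j1 * x1 + j2 * x2)) x1 :=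
  ((((hasDerivAt_id' x1).const_mul (j1 : ℝ)).add_const ((j2 : ℝ) * x2)).cos.const_mul
    (1 / (√2 * π))).congr_deriv (by ring)

theorem hasDerivAt_fourierMode_snd (j1 j2 : ℤ) (x1 x2 : ℝ) :
    HasDerivAt (fun y => fourierMode j1 j2 x1 y)
      (-(1 / (√2 * π)) * j2 * sin (j1 * x1 + j2 * x2)) x2 :=
  ((((hasDerivAt_id' x2).const_mul (j2 : ℝ)).const_add ((j1 : ℝ) * x1)).cos.const_mul
    (1 / (√2 * π))).congr_deriv (by ring)

theorem negAdvectionTG_fourierMode (j1 j2 : ℤ) (x1 x2 : ℝ) :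
    negAdvectionTG (fourierMode j1 j2) x1 x2
      = (j1 - j2) / 4 * (fourierMode (j1 + 1) (j2 + 1) x1 x2 - fourierMode (j1 - 1) (j2 - 1) x1 x2)
        + (j1 + j2) / 4 *
          (-fourierMode (j1 + 1) (j2 - 1) x1 x2 + fourierMode (j1 - 1) (j2 + 1) x1 x2) := by
  rw [negAdvectionTG, (hasDerivAt_fourierMode_fst j1 j2 x1 x2).deriv,
    (hasDerivAt_fourierMode_snd j1 j2 x1 x2).deriv]
  simp only [fourierMode]
  push_cast
  set θ := (j1 : ℝ) * x1 + j2 * x2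
  rw [show ((j1 : ℝ) + 1) * x1 + (j2 + 1) * x2 = θ + x1 + x2 by ring,
    show ((j1 : ℝ) - 1) * x1 + (j2 - 1) * x2 = θ - x1 - x2 by ring,
    show ((j1 : ℝ) + 1) * x1 + (j2 - 1) * x2 = θ + x1 - x2 by ring,
    show ((j1 : ℝ) - 1) * x1 + (j2 + 1) * x2 = θ - x1 + x2 by ring]
  simp only [cos_add, cos_sub, sin_add, sin_sub]
  ring

/-- Action of the Taylor-Green linearized Euler operator on Fourier modes:
`L φ_{j₁,j₂} = α(φ_{j₁+1,j₂+1} - φ_{j₁-1,j₂-1}) + β(-φ_{j₁+1,j₂-1} + φ_{j₁-1,j₂+1})`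
with `α = (j₁-j₂)(j₁²+j₂²-2)/(4(j₁²+j₂²))` and `β = (j₁+j₂)(j₁²+j₂²-2)/(4(j₁²+j₂²))`,
for `(j₁,j₂) ≠ (0,0)`; here `Δ⁻¹ φ_{j₁,j₂} = -(j₁²+j₂²)⁻¹ φ_{j₁,j₂}`. -/
theorem TGLin_fourierMode (j1 j2 : ℤ) (hj : (j1, j2) ≠ (0, 0)) :
    ∀ x1 x2 : ℝ,
      TGLin (fourierMode j1 j2)
        (fun a b => -(1 / ((j1 : ℝ) ^ 2 + (j2 : ℝ) ^ 2)) * fourierMode j1 j2 a b)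
        x1 x2
      = (((j1 : ℝ) - j2) * ((j1 : ℝ) ^ 2 + (j2 : ℝ) ^ 2 - 2)
            / (4 * ((j1 : ℝ) ^ 2 + (j2 : ℝ) ^ 2)))
          * (fourierMode (j1 + 1) (j2 + 1) x1 x2 - fourierMode (j1 - 1) (j2 - 1) x1 x2)
        + (((j1 : ℝ) + j2) * ((j1 : ℝ) ^ 2 + (j2 : ℝ) ^ 2 - 2)
            / (4 * ((j1 : ℝ) ^ 2 + (j2 : ℝ) ^ 2)))
          * (-fourierMode (j1 + 1) (j2 - 1) x1 x2
              + fourierMode (j1 - 1) (j2 + 1) x1 x2) := by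
  intro x1 x2
  have hnorm : (j1 : ℝ) ^ 2 + (j2 : ℝ) ^ 2 ≠ 0 := by
    rw [sq, sq]
    intro h
    obtain ⟨h1, h2⟩ := mul_self_add_mul_self_eq_zero.mp h
    exact hj (Prod.ext (by exact_mod_cast h1) (by exact_mod_cast h2))
  rw [TGLin_const_mul_self, negAdvectionTG_fourierMode]
  field_simp
  ring
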